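/- For every nonnegative integer n, the partisan chocolate game positions PC(2n, 0) and PC(2n+1, 1) are equivalent (equal as normal-play game values). -/

import Mathlib

universe u

namespace SetTheory

/-- Pre-games, as in the older Mathlib's `SetTheory.PGame` (removed from current Mathlib). -/
inductive PGame : Type (u + 1)
  | mk : ∀ α β : Type u, (α → PGame) → (β → PGame) → PGame

namespace PGame

/-- The pair `(x ≤ y, x ⧏ y)`, defined by the usual simultaneous recursion. -/
noncomputable def leLF (x : PGame.{u}) : PGame.{u} → Prop × Prop :=
  PGame.rec (motive := fun _ => PGame.{u} → Prop × Prop)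
    (fun _ _ _ _ IHl IHr y =>
      PGame.rec (motive := fun _ => Prop × Prop)
        (fun yl yr yL yR JHl JHr =>
          ((∀ i, (IHl i (mk yl yr yL yR)).2) ∧ ∀ j, (JHr j).2,
            (∃ i, (JHl i).1) ∨ ∃ j, (IHr j (mk yl yr yL yR)).1)) y) x

/-- The order on pre-games. -/
noncomputable instance : LE PGame.{u} :=
  ⟨fun x y => (leLF x y).1⟩

/-- Two pre-games are equivalent if each is `≤` the other. -/
def Equiv (x y : PGame.{u}) : Prop :=
  x ≤ y ∧ y ≤ x

end PGame

end SetTheory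

open SetTheory

/-- The partisan chocolate game position `PC n m`.
Left options: `PC n' m` with `n' < n` and `n' + m` even, and `PC n m'` with `m' < m` and
`n + m'` even. Right options: the same with "odd" in place of "even". -/
def PC : ℕ → ℕ → SetTheory.PGame
  | n, m =>
    SetTheory.PGame.mk
      {p : ℕ × ℕ // (p.2 = m ∧ p.1 < n ∧ Even (p.1 + m)) ∨ (p.1 = n ∧ p.2 < m ∧ Even (n + p.2))}
      {p : ℕ × ℕ // (p.2 = m ∧ p.1 < n ∧ Odd (p.1 + m)) ∨ (p.1 = n ∧ p.2 < m ∧ Odd (n + p.2))}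
      (fun p => PC p.1.1 p.1.2)
      (fun p => PC p.1.1 p.1.2)
termination_by n m => n + m
decreasing_by
  all_goals rcases p.2 with ⟨h1, h2, -⟩ | ⟨h1, h2, -⟩ <;> omega

/-!
We prove simultaneously that `PC (2n) 0 ≈ PC (2n+1) 1` and `PC (2n+1) 0 ≈ PC (2n) 1`, by strong
induction on `n`. A move of one player in one of these positions is answered by the
corresponding move in the other: the two resulting positions are either an equivalent pair with
smaller `n` (the induction hypothesis) or literally equal, as when cutting `PC (2n+1) 1` down to
`PC (2n) 1` is answered from `PC (2n) 0` by moving to `PC (2n) 1` itself.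
-/

namespace SetTheory.PGame

def LF (x y : PGame.{u}) : Prop :=
  (leLF x y).2

infix:50 " ⧏ " => SetTheory.PGame.LF

theorem mk_le_mk {xl xr yl yr : Type u} {xL : xl → PGame} {xR : xr → PGame}
    {yL : yl → PGame} {yR : yr → PGame} :
    mk xl xr xL xR ≤ mk yl yr yL yR ↔
      (∀ i, xL i ⧏ mk yl yr yL yR) ∧ ∀ j, mk xl xr xL xR ⧏ yR j :=
  Iff.rfl

theorem lf_mk_of_le {x : PGame.{u}} {yl yr : Type u} {yL : yl → PGame} {yR : yr → PGame}
    (i : yl) (h : x ≤ yL i) : x ⧏ mk yl yr yL yR := by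
  cases x
  exact Or.inl ⟨i, h⟩

theorem mk_lf_of_le {y : PGame.{u}} {xl xr : Type u} {xL : xl → PGame} {xR : xr → PGame}
    (j : xr) (h : xR j ≤ y) : mk xl xr xL xR ⧏ y := by
  cases y
  exact Or.inr ⟨j, h⟩

protected theorem le_rfl {x : PGame.{u}} : x ≤ x := by
  induction x with
  | mk xl xr xL xR ihl ihr =>
    exact mk_le_mk.2 ⟨fun i => lf_mk_of_le i (ihl i), fun j => mk_lf_of_le j (ihr j)⟩

end SetTheory.PGame

open SetTheory PGame

/-! In both cases of a move from `PC n m` to `PC a b` one of the coordinates is unchanged, so the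
parity condition of `PC` is just the parity of `a + b`. -/

theorem PC_lf_of_le {z : PGame} {n m a b : ℕ} (hmove : b = m ∧ a < n ∨ a = n ∧ b < m)
    (hpar : (a + b) % 2 = 0) (h : z ≤ PC a b) : z ⧏ PC n m := by
  rw [PC]
  refine lf_mk_of_le ⟨(a, b), ?_⟩ h
  simp only [Nat.even_iff]
  omega

theorem lf_PC_of_le {z : PGame} {n m a b : ℕ} (hmove : b = m ∧ a < n ∨ a = n ∧ b < m)
    (hpar : (a + b) % 2 = 1) (h : PC a b ≤ z) : PC n m ⧏ z := by
  rw [PC]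
  refine mk_lf_of_le ⟨(a, b), ?_⟩ h
  simp only [Nat.odd_iff]
  omega

theorem PC_le_PC {n m n' m' : ℕ}
    (hleft : ∀ a b, b = m ∧ a < n ∨ a = n ∧ b < m → (a + b) % 2 = 0 → PC a b ⧏ PC n' m')
    (hright : ∀ a b, b = m' ∧ a < n' ∨ a = n' ∧ b < m' → (a + b) % 2 = 1 → PC n m ⧏ PC a b) :
    PC n m ≤ PC n' m' := by
  rw [PC, PC]
  refine mk_le_mk.2 ⟨fun ⟨(a, b), hab⟩ => ?_, fun ⟨(a, b), hab⟩ => ?_⟩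
  · rw [← PC]
    simp only [Nat.even_iff] at hab
    exact hleft a b (by omega) (by omega)
  · rw [← PC]
    simp only [Nat.odd_iff] at hab
    exact hright a b (by omega) (by omega)

def PCEquivPair (n : ℕ) : Prop :=
  (PC (2 * n) 0).Equiv (PC (2 * n + 1) 1) ∧ (PC (2 * n + 1) 0).Equiv (PC (2 * n) 1)

section Induction

variable {n : ℕ}

theorem PC_two_mul_zero_le (ih : ∀ k < n, PCEquivPair k) : PC (2 * n) 0 ≤ PC (2 * n + 1) 1 := by
  refine PC_le_PC (fun a b hmove hpar => ?_) (fun a b hmove hpar => ?_)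
  · obtain ⟨rfl, ha⟩ : b = 0 ∧ a < 2 * n := by omega
    obtain ⟨k, rfl⟩ : ∃ k, a = 2 * k := ⟨a / 2, by omega⟩
    exact PC_lf_of_le (a := 2 * k + 1) (b := 1) (by omega) (by omega) (ih k (by omega)).1.1
  · rcases hmove with ⟨rfl, ha⟩ | ⟨rfl, hb⟩
    · obtain ⟨k, rfl⟩ : ∃ k, a = 2 * k := ⟨a / 2, by omega⟩
      obtain hk | rfl : k < n ∨ k = n := by omega
      · exact lf_PC_of_le (a := 2 * k + 1) (b := 0) (by omega) (by omega) (ih k hk).2.1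
      · exact PC_lf_of_le (a := 2 * k) (b := 0) (by omega) (by omega) PGame.le_rfl
    · obtain rfl : b = 0 := by omega
      exact PC_lf_of_le (a := 2 * n) (b := 0) (by omega) (by omega) PGame.le_rfl

theorem PC_two_mul_add_one_one_le (ih : ∀ k < n, PCEquivPair k) :
    PC (2 * n + 1) 1 ≤ PC (2 * n) 0 := by
  refine PC_le_PC (fun a b hmove hpar => ?_) (fun a b hmove hpar => ?_)
  · obtain ⟨rfl, ha⟩ : b = 1 ∧ a < 2 * n + 1 := by omega
    obtain ⟨k, rfl⟩ : ∃ k, a = 2 * k + 1 := ⟨a / 2, by omega⟩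
    exact PC_lf_of_le (a := 2 * k) (b := 0) (by omega) (by omega) (ih k (by omega)).1.2
  · obtain ⟨rfl, ha⟩ : b = 0 ∧ a < 2 * n := by omega
    obtain ⟨k, rfl⟩ : ∃ k, a = 2 * k + 1 := ⟨a / 2, by omega⟩
    exact lf_PC_of_le (a := 2 * k) (b := 1) (by omega) (by omega) (ih k (by omega)).2.2

theorem PC_two_mul_add_one_zero_le (ih : ∀ k < n, PCEquivPair k) :
    PC (2 * n + 1) 0 ≤ PC (2 * n) 1 := by
  refine PC_le_PC (fun a b hmove hpar => ?_) (fun a b hmove hpar => ?_)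
  · obtain ⟨rfl, ha⟩ : b = 0 ∧ a < 2 * n + 1 := by omega
    obtain ⟨k, rfl⟩ : ∃ k, a = 2 * k := ⟨a / 2, by omega⟩
    obtain hk | rfl : k < n ∨ k = n := by omega
    · exact PC_lf_of_le (a := 2 * k + 1) (b := 1) (by omega) (by omega) (ih k hk).1.1
    · exact PC_lf_of_le (a := 2 * k) (b := 0) (by omega) (by omega) PGame.le_rfl
  · obtain ⟨rfl, ha⟩ : b = 1 ∧ a < 2 * n := by omega
    obtain ⟨k, rfl⟩ : ∃ k, a = 2 * k := ⟨a / 2, by omega⟩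
    exact lf_PC_of_le (a := 2 * k + 1) (b := 0) (by omega) (by omega) (ih k (by omega)).2.1

theorem PC_two_mul_one_le (ih : ∀ k < n, PCEquivPair k) : PC (2 * n) 1 ≤ PC (2 * n + 1) 0 := by
  refine PC_le_PC (fun a b hmove hpar => ?_) (fun a b hmove hpar => ?_)
  · rcases hmove with ⟨rfl, ha⟩ | ⟨rfl, hb⟩
    · obtain ⟨k, rfl⟩ : ∃ k, a = 2 * k + 1 := ⟨a / 2, by omega⟩
      exact PC_lf_of_le (a := 2 * k) (b := 0) (by omega) (by omega) (ih k (by omega)).1.2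
    · obtain rfl : b = 0 := by omega
      exact PC_lf_of_le (a := 2 * n) (b := 0) (by omega) (by omega) PGame.le_rfl
  · obtain ⟨rfl, ha⟩ : b = 0 ∧ a < 2 * n + 1 := by omega
    obtain ⟨k, rfl⟩ : ∃ k, a = 2 * k + 1 := ⟨a / 2, by omega⟩
    exact lf_PC_of_le (a := 2 * k) (b := 1) (by omega) (by omega) (ih k (by omega)).2.2

end Induction

theorem pcEquivPair (n : ℕ) : PCEquivPair n := by
  induction n using Nat.strong_induction_on with
  | _ n ih =>
    exact ⟨⟨PC_two_mul_zero_le ih, PC_two_mul_add_one_one_le ih⟩,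
      ⟨PC_two_mul_add_one_zero_le ih, PC_two_mul_one_le ih⟩⟩

theorem stmt_8 (n : ℕ) : (PC (2 * n) 0).Equiv (PC (2 * n + 1) 1) :=
  (pcEquivPair n).1
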